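/- arXiv:math/9903150 — 3 statements merged into one kernel-verified Lean document; each statement's English description precedes it below -/
import Mathlib

section
/- Let β, γ, V, W : ℝ² → ℝ be smooth and let r : ℝ² → ℝ⁴ be smooth satisfying r_xx = β r_y + (1/2)(V - β_y) r and r_yy = γ r_x + (1/2)(W - γ_x) r. Suppose at every point r, r_x, r_y, r_xy are linearly independent. Then the compatibility conditions hold: β_yyy - 2β_y W - β W_y = γ_xxx - 2γ_x V - γ V_x, W_x = 2γ β_y + β γ_y, and V_y = 2β γ_x + γ β_x. -/
/-- Partial derivative in the first variable. -/
noncomputable def pdx {E : Type*} [NormedAddCommGroup E] [NormedSpace ℝ E]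
    (f : ℝ → ℝ → E) : ℝ → ℝ → E := fun x y => deriv (fun t => f t y) x

/-- Partial derivative in the second variable. -/
noncomputable def pdy {E : Type*} [NormedAddCommGroup E] [NormedSpace ℝ E]
    (f : ℝ → ℝ → E) : ℝ → ℝ → E := fun x y => deriv (fun t => f x t) y

open Function

section lib
variable {E : Type*} [NormedAddCommGroup E] [NormedSpace ℝ E] {f : ℝ → ℝ → E}

lemma hasDerivAt_slice_x (hf : ContDiff ℝ (⊤ : ℕ∞) (uncurry f)) (x y : ℝ) :
    HasDerivAt (fun t => f t y) (fderiv ℝ (uncurry f) (x, y) (1, 0)) x := by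
  have h1 : HasDerivAt (fun t : ℝ => (t, y)) ((1:ℝ), (0:ℝ)) x :=
    (hasDerivAt_id x).prodMk (hasDerivAt_const x y)
  exact ((hf.differentiable (by simp) (x, y)).hasFDerivAt).comp_hasDerivAt x h1

lemma hasDerivAt_slice_y (hf : ContDiff ℝ (⊤ : ℕ∞) (uncurry f)) (x y : ℝ) :
    HasDerivAt (fun t => f x t) (fderiv ℝ (uncurry f) (x, y) (0, 1)) y := by
  have h1 : HasDerivAt (fun t : ℝ => (x, t)) ((0:ℝ), (1:ℝ)) y :=
    (hasDerivAt_const y x).prodMk (hasDerivAt_id y)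
  exact ((hf.differentiable (by simp) (x, y)).hasFDerivAt).comp_hasDerivAt y h1

lemma pdx_eq (hf : ContDiff ℝ (⊤ : ℕ∞) (uncurry f)) (x y : ℝ) :
    pdx f x y = fderiv ℝ (uncurry f) (x, y) (1, 0) := (hasDerivAt_slice_x hf x y).deriv

lemma pdy_eq (hf : ContDiff ℝ (⊤ : ℕ∞) (uncurry f)) (x y : ℝ) :
    pdy f x y = fderiv ℝ (uncurry f) (x, y) (0, 1) := (hasDerivAt_slice_y hf x y).deriv

lemma hasDerivAt_pdx (hf : ContDiff ℝ (⊤ : ℕ∞) (uncurry f)) (x y : ℝ) :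
    HasDerivAt (fun t => f t y) (pdx f x y) x :=
  (hasDerivAt_slice_x hf x y).differentiableAt.hasDerivAt

lemma hasDerivAt_pdy (hf : ContDiff ℝ (⊤ : ℕ∞) (uncurry f)) (x y : ℝ) :
    HasDerivAt (fun t => f x t) (pdy f x y) y :=
  (hasDerivAt_slice_y hf x y).differentiableAt.hasDerivAt

lemma contDiff_pdx (hf : ContDiff ℝ (⊤ : ℕ∞) (uncurry f)) : ContDiff ℝ (⊤ : ℕ∞) (uncurry (pdx f)) := by
  have h : uncurry (pdx f) = fun p : ℝ × ℝ => fderiv ℝ (uncurry f) p ((1:ℝ), (0:ℝ)) := by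
    funext p
    simpa [uncurry] using pdx_eq hf p.1 p.2
  rw [h]
  exact (hf.fderiv_right (by simp)).clm_apply contDiff_const

lemma contDiff_pdy (hf : ContDiff ℝ (⊤ : ℕ∞) (uncurry f)) : ContDiff ℝ (⊤ : ℕ∞) (uncurry (pdy f)) := by
  have h : uncurry (pdy f) = fun p : ℝ × ℝ => fderiv ℝ (uncurry f) p ((0:ℝ), (1:ℝ)) := by
    funext p
    simpa [uncurry] using pdy_eq hf p.1 p.2
  rw [h]
  exact (hf.fderiv_right (by simp)).clm_apply contDiff_const

lemma pdx_pdy_comm (hf : ContDiff ℝ (⊤ : ℕ∞) (uncurry f)) : pdx (pdy f) = pdy (pdx f) := by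
  funext x y
  have hux : uncurry (pdx f) = fun p : ℝ × ℝ => fderiv ℝ (uncurry f) p ((1:ℝ), (0:ℝ)) := by
    funext p; simpa [uncurry] using pdx_eq hf p.1 p.2
  have huy : uncurry (pdy f) = fun p : ℝ × ℝ => fderiv ℝ (uncurry f) p ((0:ℝ), (1:ℝ)) := by
    funext p; simpa [uncurry] using pdy_eq hf p.1 p.2
  have hdf : Differentiable ℝ (fderiv ℝ (uncurry f)) :=
    (hf.fderiv_right (m := (⊤ : ℕ∞)) (by simp)).differentiable (by simp)
  have key : ∀ v w : ℝ × ℝ,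
      fderiv ℝ (fun p : ℝ × ℝ => fderiv ℝ (uncurry f) p v) (x, y) w
        = fderiv ℝ (fderiv ℝ (uncurry f)) (x, y) w v := by
    intro v w
    rw [fderiv_clm_apply (hdf (x, y)) (differentiableAt_const v)]
    simp
  have hsymm : ∀ v w : ℝ × ℝ,
      fderiv ℝ (fderiv ℝ (uncurry f)) (x, y) v w
        = fderiv ℝ (fderiv ℝ (uncurry f)) (x, y) w v := by
    intro v w
    exact second_derivative_symmetric
      (fun p => (hf.differentiable (by simp) p).hasFDerivAt)
      ((hdf (x, y)).hasFDerivAt) v w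
  calc pdx (pdy f) x y
      = fderiv ℝ (uncurry (pdy f)) (x, y) (1, 0) := pdx_eq (contDiff_pdy hf) x y
    _ = fderiv ℝ (fderiv ℝ (uncurry f)) (x, y) (1, 0) (0, 1) := by rw [huy]; exact key _ _
    _ = fderiv ℝ (fderiv ℝ (uncurry f)) (x, y) (0, 1) (1, 0) := hsymm _ _
    _ = fderiv ℝ (uncurry (pdx f)) (x, y) (0, 1) := by rw [hux]; exact (key _ _).symm
    _ = pdy (pdx f) x y := (pdy_eq (contDiff_pdx hf) x y).symm

end lib
theorem gauss_codazzi_compatibility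
    (β γ V W : ℝ → ℝ → ℝ) (r : ℝ → ℝ → (Fin 4 → ℝ))
    (hβ : ContDiff ℝ (⊤ : ℕ∞) (Function.uncurry β)) (hγ : ContDiff ℝ (⊤ : ℕ∞) (Function.uncurry γ))
    (hV : ContDiff ℝ (⊤ : ℕ∞) (Function.uncurry V)) (hW : ContDiff ℝ (⊤ : ℕ∞) (Function.uncurry W))
    (hr : ContDiff ℝ (⊤ : ℕ∞) (Function.uncurry r))
    (heq1 : ∀ x y, pdx (pdx r) x y
      = β x y • pdy r x y + ((1:ℝ)/2 * (V x y - pdy β x y)) • r x y)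
    (heq2 : ∀ x y, pdy (pdy r) x y
      = γ x y • pdx r x y + ((1:ℝ)/2 * (W x y - pdx γ x y)) • r x y)
    (hind : ∀ x y, LinearIndependent ℝ ![r x y, pdx r x y, pdy r x y, pdy (pdx r) x y]) :
    (∀ x y, pdy (pdy (pdy β)) x y - 2 * pdy β x y * W x y - β x y * pdy W x y
        = pdx (pdx (pdx γ)) x y - 2 * pdx γ x y * V x y - γ x y * pdx V x y) ∧
    (∀ x y, pdx W x y = 2 * γ x y * pdy β x y + β x y * pdy γ x y) ∧
    (∀ x y, pdy V x y = 2 * β x y * pdx γ x y + γ x y * pdx β x y) := by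
  have sβy := contDiff_pdy hβ
  have sβx := contDiff_pdx hβ
  have sβyy := contDiff_pdy sβy
  have sγx := contDiff_pdx hγ
  have sγy := contDiff_pdy hγ
  have sγxx := contDiff_pdx sγx
  have sVy := contDiff_pdy hV
  have sWx := contDiff_pdx hW
  have sr1 := contDiff_pdx hr
  have sr2 := contDiff_pdy hr
  have hE1 : pdx (pdx r) = fun u v =>
      β u v • pdy r u v + ((1:ℝ)/2 * (V u v - pdy β u v)) • r u v :=
    funext fun u => funext fun v => heq1 u v
  have hE2 : pdy (pdy r) = fun u v =>
      γ u v • pdx r u v + ((1:ℝ)/2 * (W u v - pdx γ u v)) • r u v :=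
    funext fun u => funext fun v => heq2 u v
  have c0 : pdx (pdy r) = pdy (pdx r) := pdx_pdy_comm hr
  -- first derivative of heq1 in y
  have hF1 : pdy (pdx (pdx r)) = fun u v =>
      (β u v * γ u v) • pdx r u v
      + (pdy β u v + (1:ℝ)/2 * (V u v - pdy β u v)) • pdy r u v
      + (β u v * ((1:ℝ)/2 * (W u v - pdx γ u v))
          + (1:ℝ)/2 * (pdy V u v - pdy (pdy β) u v)) • r u v := by
    funext u v
    conv_lhs => rw [hE1]
    exact (((hasDerivAt_pdy hβ u v).smul (hasDerivAt_pdy sr2 u v)).add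
      ((((hasDerivAt_pdy hV u v).sub (hasDerivAt_pdy sβy u v)).const_mul
        ((1:ℝ)/2)).smul (hasDerivAt_pdy hr u v))).deriv.trans
      (by rw [heq2 u v]; simp only [Pi.add_apply, Pi.sub_apply, Pi.mul_apply]; module)
  -- first derivative of heq2 in x
  have hG1 : pdx (pdy (pdy r)) = fun u v =>
      (pdx γ u v + (1:ℝ)/2 * (W u v - pdx γ u v)) • pdx r u v
      + (γ u v * β u v) • pdy r u v
      + (γ u v * ((1:ℝ)/2 * (V u v - pdy β u v))
          + (1:ℝ)/2 * (pdx W u v - pdx (pdx γ) u v)) • r u v := by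
    funext u v
    conv_lhs => rw [hE2]
    exact (((hasDerivAt_pdx hγ u v).smul (hasDerivAt_pdx sr1 u v)).add
      ((((hasDerivAt_pdx hW u v).sub (hasDerivAt_pdx sγx u v)).const_mul
        ((1:ℝ)/2)).smul (hasDerivAt_pdx hr u v))).deriv.trans
      (by rw [heq1 u v]; simp only [Pi.add_apply, Pi.sub_apply, Pi.mul_apply]; module)
  -- second derivatives
  have hT2 : ∀ x y, pdy (pdy (pdx (pdx r))) x y =
      (pdy β x y * γ x y + β x y * pdy γ x y
        + (pdy β x y + (1:ℝ)/2 * (V x y - pdy β x y)) * γ x y) • pdx r x y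
      + ((pdy (pdy β) x y + (1:ℝ)/2 * (pdy V x y - pdy (pdy β) x y))
        + (β x y * ((1:ℝ)/2 * (W x y - pdx γ x y))
          + (1:ℝ)/2 * (pdy V x y - pdy (pdy β) x y))) • pdy r x y
      + ((pdy β x y * ((1:ℝ)/2 * (W x y - pdx γ x y))
          + β x y * ((1:ℝ)/2 * (pdy W x y - pdy (pdx γ) x y))
          + (1:ℝ)/2 * (pdy (pdy V) x y - pdy (pdy (pdy β)) x y))
        + (pdy β x y + (1:ℝ)/2 * (V x y - pdy β x y))
          * ((1:ℝ)/2 * (W x y - pdx γ x y))) • r x y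
      + (β x y * γ x y) • pdy (pdx r) x y := by
    intro x y
    conv_lhs => rw [hF1]
    refine (((((hasDerivAt_pdy hβ x y).mul (hasDerivAt_pdy hγ x y)).smul
        (hasDerivAt_pdy sr1 x y)).add
      (((hasDerivAt_pdy sβy x y).add (((hasDerivAt_pdy hV x y).sub
          (hasDerivAt_pdy sβy x y)).const_mul ((1:ℝ)/2))).smul
        (hasDerivAt_pdy sr2 x y))).add
      ((((hasDerivAt_pdy hβ x y).mul (((hasDerivAt_pdy hW x y).sub
          (hasDerivAt_pdy sγx x y)).const_mul ((1:ℝ)/2))).add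
        (((hasDerivAt_pdy sVy x y).sub (hasDerivAt_pdy sβyy x y)).const_mul
          ((1:ℝ)/2))).smul (hasDerivAt_pdy hr x y))).deriv.trans ?_
    rw [heq2 x y]
    simp only [Pi.add_apply, Pi.sub_apply, Pi.mul_apply]
    module
  have hS2 : ∀ x y, pdx (pdx (pdy (pdy r))) x y =
      ((pdx (pdx γ) x y + (1:ℝ)/2 * (pdx W x y - pdx (pdx γ) x y))
        + (γ x y * ((1:ℝ)/2 * (V x y - pdy β x y))
          + (1:ℝ)/2 * (pdx W x y - pdx (pdx γ) x y))) • pdx r x y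
      + ((pdx γ x y * β x y + γ x y * pdx β x y)
        + (pdx γ x y + (1:ℝ)/2 * (W x y - pdx γ x y)) * β x y) • pdy r x y
      + ((pdx γ x y * ((1:ℝ)/2 * (V x y - pdy β x y))
          + γ x y * ((1:ℝ)/2 * (pdx V x y - pdx (pdy β) x y))
          + (1:ℝ)/2 * (pdx (pdx W) x y - pdx (pdx (pdx γ)) x y))
        + (pdx γ x y + (1:ℝ)/2 * (W x y - pdx γ x y))
          * ((1:ℝ)/2 * (V x y - pdy β x y))) • r x y
      + (γ x y * β x y) • pdy (pdx r) x y := by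
    intro x y
    conv_lhs => rw [hG1]
    refine (((((hasDerivAt_pdx sγx x y).add (((hasDerivAt_pdx hW x y).sub
          (hasDerivAt_pdx sγx x y)).const_mul ((1:ℝ)/2))).smul
        (hasDerivAt_pdx sr1 x y)).add
      (((hasDerivAt_pdx hγ x y).mul (hasDerivAt_pdx hβ x y)).smul
        (hasDerivAt_pdx sr2 x y))).add
      ((((hasDerivAt_pdx hγ x y).mul (((hasDerivAt_pdx hV x y).sub
          (hasDerivAt_pdx sβy x y)).const_mul ((1:ℝ)/2))).add
        (((hasDerivAt_pdx sWx x y).sub (hasDerivAt_pdx sγxx x y)).const_mul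
          ((1:ℝ)/2))).smul (hasDerivAt_pdx hr x y))).deriv.trans ?_
    rw [heq1 x y, c0]
    simp only [Pi.add_apply, Pi.sub_apply, Pi.mul_apply]
    module
  -- equality of mixed fourth derivatives
  have e1 : pdy (pdx (pdx r)) = pdx (pdx (pdy r)) := by
    rw [← pdx_pdy_comm sr1, ← c0]
  have e2 : pdy (pdy (pdx (pdx r))) = pdx (pdx (pdy (pdy r))) := by
    rw [e1, ← pdx_pdy_comm (contDiff_pdx sr2), ← pdx_pdy_comm sr2]
  -- extract coefficient identities via linear independence
  have key : ∀ x y,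
      ((pdy β x y * ((1:ℝ)/2 * (W x y - pdx γ x y))
          + β x y * ((1:ℝ)/2 * (pdy W x y - pdy (pdx γ) x y))
          + (1:ℝ)/2 * (pdy (pdy V) x y - pdy (pdy (pdy β)) x y))
        + (pdy β x y + (1:ℝ)/2 * (V x y - pdy β x y))
          * ((1:ℝ)/2 * (W x y - pdx γ x y)))
      = ((pdx γ x y * ((1:ℝ)/2 * (V x y - pdy β x y))
          + γ x y * ((1:ℝ)/2 * (pdx V x y - pdx (pdy β) x y))
          + (1:ℝ)/2 * (pdx (pdx W) x y - pdx (pdx (pdx γ)) x y))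
        + (pdx γ x y + (1:ℝ)/2 * (W x y - pdx γ x y))
          * ((1:ℝ)/2 * (V x y - pdy β x y))) ∧
      (pdy β x y * γ x y + β x y * pdy γ x y
        + (pdy β x y + (1:ℝ)/2 * (V x y - pdy β x y)) * γ x y)
      = ((pdx (pdx γ) x y + (1:ℝ)/2 * (pdx W x y - pdx (pdx γ) x y))
        + (γ x y * ((1:ℝ)/2 * (V x y - pdy β x y))
          + (1:ℝ)/2 * (pdx W x y - pdx (pdx γ) x y))) ∧
      ((pdy (pdy β) x y + (1:ℝ)/2 * (pdy V x y - pdy (pdy β) x y))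
        + (β x y * ((1:ℝ)/2 * (W x y - pdx γ x y))
          + (1:ℝ)/2 * (pdy V x y - pdy (pdy β) x y)))
      = ((pdx γ x y * β x y + γ x y * pdx β x y)
        + (pdx γ x y + (1:ℝ)/2 * (W x y - pdx γ x y)) * β x y) := by
    intro x y
    have hEq := (hT2 x y).symm.trans ((congrFun (congrFun e2 x) y).trans (hS2 x y))
    set A1 := (pdy β x y * γ x y + β x y * pdy γ x y
        + (pdy β x y + (1:ℝ)/2 * (V x y - pdy β x y)) * γ x y) with hA1
    set A2 := ((pdy (pdy β) x y + (1:ℝ)/2 * (pdy V x y - pdy (pdy β) x y))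
        + (β x y * ((1:ℝ)/2 * (W x y - pdx γ x y))
          + (1:ℝ)/2 * (pdy V x y - pdy (pdy β) x y))) with hA2
    set A3 := ((pdy β x y * ((1:ℝ)/2 * (W x y - pdx γ x y))
          + β x y * ((1:ℝ)/2 * (pdy W x y - pdy (pdx γ) x y))
          + (1:ℝ)/2 * (pdy (pdy V) x y - pdy (pdy (pdy β)) x y))
        + (pdy β x y + (1:ℝ)/2 * (V x y - pdy β x y))
          * ((1:ℝ)/2 * (W x y - pdx γ x y))) with hA3
    set B1 := ((pdx (pdx γ) x y + (1:ℝ)/2 * (pdx W x y - pdx (pdx γ) x y))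
        + (γ x y * ((1:ℝ)/2 * (V x y - pdy β x y))
          + (1:ℝ)/2 * (pdx W x y - pdx (pdx γ) x y))) with hB1
    set B2 := ((pdx γ x y * β x y + γ x y * pdx β x y)
        + (pdx γ x y + (1:ℝ)/2 * (W x y - pdx γ x y)) * β x y) with hB2
    set B3 := ((pdx γ x y * ((1:ℝ)/2 * (V x y - pdy β x y))
          + γ x y * ((1:ℝ)/2 * (pdx V x y - pdx (pdy β) x y))
          + (1:ℝ)/2 * (pdx (pdx W) x y - pdx (pdx (pdx γ)) x y))
        + (pdx γ x y + (1:ℝ)/2 * (W x y - pdx γ x y))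
          * ((1:ℝ)/2 * (V x y - pdy β x y))) with hB3
    have hsum : ∑ i, (![A3 - B3, A1 - B1, A2 - B2,
        β x y * γ x y - γ x y * β x y] : Fin 4 → ℝ) i
        • (![r x y, pdx r x y, pdy r x y, pdy (pdx r) x y] : Fin 4 → (Fin 4 → ℝ)) i
        = 0 := by
      simp only [Fin.sum_univ_four, Matrix.cons_val_zero, Matrix.cons_val_one,
        Matrix.head_cons, Matrix.cons_val_two, Matrix.tail_cons, Matrix.cons_val_three]
      linear_combination (norm := module) hEq
    have hz := Fintype.linearIndependent_iff.mp (hind x y) _ hsum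
    refine ⟨sub_eq_zero.mp ?_, sub_eq_zero.mp ?_, sub_eq_zero.mp ?_⟩
    · simpa using hz 0
    · simpa using hz 1
    · simpa using hz 2
  have t2 : ∀ x y, pdx W x y = 2 * γ x y * pdy β x y + β x y * pdy γ x y := by
    intro x y
    linear_combination -(key x y).2.1
  have t3 : ∀ x y, pdy V x y = 2 * β x y * pdx γ x y + γ x y * pdx β x y := by
    intro x y
    linear_combination (key x y).2.2
  refine ⟨fun x y => ?_, t2, t3⟩
  have hWfun : pdx W = fun u v => 2 * γ u v * pdy β u v + β u v * pdy γ u v :=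
    funext fun u => funext fun v => t2 u v
  have hVfun : pdy V = fun u v => 2 * β u v * pdx γ u v + γ u v * pdx β u v :=
    funext fun u => funext fun v => t3 u v
  have hWxx : pdx (pdx W) x y
      = 2 * (pdx γ x y * pdy β x y) + 2 * γ x y * pdx (pdy β) x y
        + (pdx β x y * pdy γ x y + β x y * pdx (pdy γ) x y) := by
    conv_lhs => rw [hWfun]
    exact ((((hasDerivAt_pdx hγ x y).const_mul 2).mul (hasDerivAt_pdx sβy x y)).add
      ((hasDerivAt_pdx hβ x y).mul (hasDerivAt_pdx sγy x y))).deriv.trans (by ring)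
  have hVyy : pdy (pdy V) x y
      = 2 * (pdy β x y * pdx γ x y) + 2 * β x y * pdy (pdx γ) x y
        + (pdy γ x y * pdx β x y + γ x y * pdy (pdx β) x y) := by
    conv_lhs => rw [hVfun]
    exact ((((hasDerivAt_pdy hβ x y).const_mul 2).mul (hasDerivAt_pdy sγx x y)).add
      ((hasDerivAt_pdy hγ x y).mul (hasDerivAt_pdy sβx x y))).deriv.trans (by ring)
  have hcβ : pdy (pdx β) x y = pdx (pdy β) x y :=
    congrFun (congrFun (pdx_pdy_comm hβ).symm x) y
  have hcγ : pdy (pdx γ) x y = pdx (pdy γ) x y :=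
    congrFun (congrFun (pdx_pdy_comm hγ).symm x) y
  linear_combination (-2 : ℝ) * (key x y).1 + hVyy - hWxx
    + β x y * hcγ + γ x y * hcβ
end

section
/- Let f, g : ℝ → ℝ be smooth with f' > 0 and g' > 0 everywhere and f(x) + g(y) nowhere zero. Then β defined by β(x,y)² = (9/4) f'(x) g'(y)/(f(x)+g(y))², with β > 0, satisfies the Liouville equation (ln β)_xy = (4/9) β². -/
theorem steiner_liouville
    (f g : ℝ → ℝ) (hf : ContDiff ℝ (⊤ : ℕ∞) f) (hg : ContDiff ℝ (⊤ : ℕ∞) g)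
    (hf' : ∀ x, deriv f x > 0) (hg' : ∀ y, deriv g y > 0)
    (hfg : ∀ x y, f x + g y ≠ 0)
    (β : ℝ → ℝ → ℝ) (hβpos : ∀ x y, β x y > 0)
    (hβ : ∀ x y, (β x y)^2 = (9/4) * deriv f x * deriv g y / (f x + g y)^2) :
    ∀ x y, pdy (pdx (fun x y => Real.log (β x y))) x y = (4/9) * (β x y)^2 := by
  have hfi : ContDiff ℝ (⊤ : ℕ∞) f := hf.of_le (by simp)
  have hgi : ContDiff ℝ (⊤ : ℕ∞) g := hg.of_le (by simp)
  have hfd : Differentiable ℝ f := hfi.differentiable (by norm_num)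
  have hgd : Differentiable ℝ g := hgi.differentiable (by norm_num)
  have hf2 : Differentiable ℝ (deriv f) :=
    ((contDiff_infty_iff_deriv.mp hfi).2).differentiable (by norm_num)
  -- explicit formula for log β
  have hlog : ∀ x y, Real.log (β x y)
      = (1/2) * Real.log (9/4) + (1/2) * Real.log (deriv f x)
        + (1/2) * Real.log (deriv g y) - Real.log (f x + g y) := by
    intro x y
    have h1 : Real.log ((β x y)^2) = 2 * Real.log (β x y) := by
      rw [Real.log_pow]; push_cast; ring
    have h2 : Real.log ((9/4) * deriv f x * deriv g y / (f x + g y)^2)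
        = Real.log (9/4) + Real.log (deriv f x) + Real.log (deriv g y)
          - 2 * Real.log (f x + g y) := by
      rw [Real.log_div (by have h:=hf' x; have h2:=hg' y; positivity) (pow_ne_zero _ (hfg x y)),
          Real.log_mul (by have h:=hf' x; positivity) (ne_of_gt (hg' y)),
          Real.log_mul (by norm_num) (ne_of_gt (hf' x)), Real.log_pow]
      push_cast; ring
    rw [hβ x y, h2] at h1
    linarith
  -- the x-partial derivative
  have hpdx : ∀ x y, pdx (fun x y => Real.log (β x y)) x y
      = (1/2) * (deriv (deriv f) x / deriv f x) - deriv f x / (f x + g y) := by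
    intro x y
    have hfun : (fun t => Real.log (β t y))
        = fun t => (1/2) * Real.log (9/4) + (1/2) * Real.log (deriv f t)
          + (1/2) * Real.log (deriv g y) - Real.log (f t + g y) := by
      funext t; exact hlog t y
    have h1 : HasDerivAt (fun t => Real.log (deriv f t))
        (deriv (deriv f) x / deriv f x) x :=
      ((hf2 x).hasDerivAt).log (ne_of_gt (hf' x))
    have h2 : HasDerivAt (fun t => Real.log (f t + g y))
        (deriv f x / (f x + g y)) x :=
      (((hfd x).hasDerivAt).add_const (g y)).log (hfg x y)
    have h3 : HasDerivAt (fun t => (1/2) * Real.log (9/4) + (1/2) * Real.log (deriv f t)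
          + (1/2) * Real.log (deriv g y) - Real.log (f t + g y))
        ((1/2) * (deriv (deriv f) x / deriv f x) - deriv f x / (f x + g y)) x := by
      have h4 := (((h1.const_mul (1/2 : ℝ)).const_add
        ((1/2) * Real.log (9/4))).add_const ((1/2) * Real.log (deriv g y))).sub h2
      exact h4
    simp only [pdx]
    rw [hfun]
    exact h3.deriv
  intro x y
  have hfun2 : (fun t => pdx (fun x y => Real.log (β x y)) x t)
      = fun t => (1/2) * (deriv (deriv f) x / deriv f x) - deriv f x / (f x + g t) := by
    funext t; exact hpdx x t
  have hne : f x + g y ≠ 0 := hfg x y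
  have hinv : HasDerivAt (fun t => (f x + g t)⁻¹)
      (-(deriv g y) / (f x + g y)^2) y :=
    (((hgd y).hasDerivAt).const_add (f x)).inv hne
  have h4 : HasDerivAt (fun t => deriv f x / (f x + g t))
      (-(deriv f x * deriv g y / (f x + g y)^2)) y := by
    have h := hinv.const_mul (deriv f x)
    have heq : (fun t => deriv f x * (f x + g t)⁻¹)
        = fun t => deriv f x / (f x + g t) := by
      funext t; rw [div_eq_mul_inv]
    rw [heq] at h
    exact h.congr_deriv (by ring)
  have h5 : HasDerivAt (fun t => (1/2) * (deriv (deriv f) x / deriv f x)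
        - deriv f x / (f x + g t))
      (deriv f x * deriv g y / (f x + g y)^2) y := by
    have := (hasDerivAt_const y ((1/2) * (deriv (deriv f) x / deriv f x))).sub h4
    simpa [Pi.sub_def] using this
  simp only [pdy]
  rw [hfun2, h5.deriv, hβ x y]
  ring
end

section
/- Let β = γ = φ_x with φ smooth, so the surface-R condition β_y = γ_x holds; suppose (β, γ, V, W) satisfies the projective Gauss–Codazzi equations. Then for every constant λ, (β, γ, V + λ, W + λ) also satisfies the projective Gauss–Codazzi equations. More generally, if β, γ, V, W are smooth with β_y = γ_x and satisfy W_x = 2γβ_y + βγ_y, V_y = 2βγ_x + γβ_x and β_yyy - 2β_y W - βW_y = γ_xxx - 2γ_x V - γV_x, then (β, γ, V+λ, W+λ) satisfies the same three equations. -/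
theorem surfaces_R_spectral_parameter
    (β γ V W : ℝ → ℝ → ℝ) (lam : ℝ)
    (hβ : ContDiff ℝ (⊤ : ℕ∞) (Function.uncurry β)) (hγ : ContDiff ℝ (⊤ : ℕ∞) (Function.uncurry γ))
    (hV : ContDiff ℝ (⊤ : ℕ∞) (Function.uncurry V)) (hW : ContDiff ℝ (⊤ : ℕ∞) (Function.uncurry W))
    (hR : ∀ x y, pdy β x y = pdx γ x y)
    (h2 : ∀ x y, pdx W x y = 2 * γ x y * pdy β x y + β x y * pdy γ x y)
    (h3 : ∀ x y, pdy V x y = 2 * β x y * pdx γ x y + γ x y * pdx β x y)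
    (h1 : ∀ x y, pdy (pdy (pdy β)) x y - 2 * pdy β x y * W x y - β x y * pdy W x y
        = pdx (pdx (pdx γ)) x y - 2 * pdx γ x y * V x y - γ x y * pdx V x y) :
    (∀ x y, pdy (pdy (pdy β)) x y - 2 * pdy β x y * (W x y + lam)
          - β x y * pdy (fun x y => W x y + lam) x y
        = pdx (pdx (pdx γ)) x y - 2 * pdx γ x y * (V x y + lam)
          - γ x y * pdx (fun x y => V x y + lam) x y) ∧
    (∀ x y, pdx (fun x y => W x y + lam) x y = 2 * γ x y * pdy β x y + β x y * pdy γ x y) ∧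
    (∀ x y, pdy (fun x y => V x y + lam) x y = 2 * β x y * pdx γ x y + γ x y * pdx β x y) := by

  have px : ∀ (f : ℝ → ℝ → ℝ) x y, pdx (fun x y => f x y + lam) x y = pdx f x y := by
    intro f x y
    simp [pdx, deriv_add_const]
  have py : ∀ (f : ℝ → ℝ → ℝ) x y, pdy (fun x y => f x y + lam) x y = pdy f x y := by
    intro f x y
    simp [pdy, deriv_add_const]
  refine ⟨fun x y => ?_, fun x y => by rw [px]; exact h2 x y,
    fun x y => by rw [py]; exact h3 x y⟩
  rw [px, py]
  have := h1 x y
  have hr := hR x y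
  linear_combination this - 2 * lam * hr
end
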